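/- Let Λ=(v(ab)^ω, σ(Rϑ)^ω) be a directive bi-sequence of a ternary generalized pseudostandard word u over {0,1,2}, where v is a finite word over {0,1,2}, σ a finite sequence of antimorphisms from {E₀,E₁,E₂,R} with |v|=|σ|=n₀, ϑ∈{E₀,E₁,E₂} and a,b∈{0,1,2} satisfy ϑ(a)=b. Write w_{n₀+1}=ps, where asb is the longest ϑ-palindromic suffix of the word w_{n₀+1}b. Then for every k≥1: w_{n₀+2k-1}=ps(ϑ(p)R(p))^{k-1} and w_{n₀+2k}=ps(ϑ(p)R(p))^{k-1}ϑ(p). Consequently, u is periodic with period p·(Rϑ)(p), where (Rϑ)(p) denotes the image of p under the composition R∘ϑ. -/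

import Mathlib

/-!
Generalized pseudostandard words (de Luca–De Luca) over binary and ternary
alphabets: antimorphisms, pseudopalindromic closure, directive bi-sequences.
-/

namespace GPS

variable {A : Type*} [Inhabited A]

/-- The involutory antimorphism on finite words induced by the letter map `f`:
reverse the word and apply `f` letterwise. -/
def anti (f : A → A) (w : List A) : List A := (w.map f).reverse

/-- `w` is an `f`-palindrome (a `ϑ`-palindrome for the antimorphism induced by `f`). -/
def IsPal (f : A → A) (w : List A) : Prop := anti f w = w

/-- The `f`-palindromic closure of `w`: a shortest `f`-palindrome having `w` as a
prefix (returns `w` itself in the degenerate case where none exists). -/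
noncomputable def closure (f : A → A) (w : List A) : List A := by
  classical
  exact if h : ∃ n : ℕ, ∃ p : List A, p.length = n ∧ w <+: p ∧ IsPal f p then
    Classical.choose (Nat.find_spec h)
  else w

/-- The sequence of pseudopalindromic prefixes `w_n` of the generalized
pseudostandard word `u(Δ, Θ)`; `prefixes Δ Θ n` is the paper's `w_n`, with
`Δ n = δ_{n+1}` and `Θ n = ϑ_{n+1}` (0-based indexing of the bi-sequence). -/
noncomputable def prefixes (Δ : ℕ → A) (Θ : ℕ → A → A) : ℕ → List A
  | 0 => []
  | n + 1 => closure (Θ n) (prefixes Δ Θ n ++ [Δ n])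

/-- The generalized pseudostandard word `u(Δ, Θ)` as an infinite word `ℕ → A`. -/
noncomputable def word (Δ : ℕ → A) (Θ : ℕ → A → A) (k : ℕ) : A :=
  (prefixes Δ Θ (k + 1)).getD k default

/-- `p` is a (finite) prefix of the infinite word `x`. -/
def IsPref (p : List A) (x : ℕ → A) : Prop := ∀ i < p.length, p.getD i default = x i

/-- `w` is a factor of the infinite word `x`. -/
def IsFactor (w : List A) (x : ℕ → A) : Prop :=
  ∃ i : ℕ, ∀ j < w.length, w.getD j default = x (i + j)

/-- `w` is a left special factor of the infinite word `x`. -/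
def LeftSpecial (w : List A) (x : ℕ → A) : Prop :=
  ∃ a b : A, a ≠ b ∧ IsFactor (a :: w) x ∧ IsFactor (b :: w) x

/-- The infinite word `x` is (eventually) periodic, i.e. of the form `z v^ω`
with `v` nonempty. -/
def Periodic (x : ℕ → A) : Prop :=
  ∃ p : ℕ, 0 < p ∧ ∃ N : ℕ, ∀ n, N ≤ n → x (n + p) = x n

/-- The infinite word `x` is purely periodic with period `q`, i.e. `x = q^ω`. -/
def PurePeriod (q : List A) (x : ℕ → A) : Prop :=
  q ≠ [] ∧ ∀ i : ℕ, x i = q.getD (i % q.length) default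

/-- Concatenation of `k` copies of the finite word `l`, i.e. `l^k`. -/
def wpow (l : List A) (k : ℕ) : List A := (List.replicate k l).flatten

/-! ### The binary alphabet `{0,1}` -/

/-- Letter map of the reversal antimorphism `R` over `{0,1}`. -/
def Rb : Fin 2 → Fin 2 := id

/-- Letter map of the exchange antimorphism `E` over `{0,1}` (`0 ↔ 1`). -/
def Eb : Fin 2 → Fin 2 := fun x => x + 1

/-- A binary directive bi-sequence is normalized if the sequence `(w_n)` contains
every prefix of `u(Δ,Θ)` that is an `R`-palindrome or an `E`-palindrome. -/
def NormalizedB (Δ : ℕ → Fin 2) (Θ : ℕ → Fin 2 → Fin 2) : Prop :=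
  ∀ p : List (Fin 2), IsPref p (word Δ Θ) → (IsPal Rb p ∨ IsPal Eb p) →
    ∃ n : ℕ, prefixes Δ Θ n = p

/-! ### The ternary alphabet `{0,1,2}` -/

/-- Letter map of the reversal antimorphism `R` over `{0,1,2}`. -/
def Rt : Fin 3 → Fin 3 := id

/-- Letter map of the exchange antimorphism `E_i` over `{0,1,2}`: it fixes `i`
and exchanges the other two letters (indeed `-(i+x) = i` iff `x = i` in `Fin 3`). -/
def Et (i : Fin 3) : Fin 3 → Fin 3 := fun x => -(i + x)

/-- A ternary directive bi-sequence is normalized if the sequence `(w_n)` contains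
every prefix of `u(Δ,Θ)` that is a `ϑ`-palindrome for some involutory antimorphism `ϑ`. -/
def NormalizedT (Δ : ℕ → Fin 3) (Θ : ℕ → Fin 3 → Fin 3) : Prop :=
  ∀ p : List (Fin 3), IsPref p (word Δ Θ) → (IsPal Rt p ∨ ∃ i : Fin 3, IsPal (Et i) p) →
    ∃ n : ℕ, prefixes Δ Θ n = p

end GPS

/-! With `ϑ = E_i` and `R` commuting involutions, `w = p s` is an `R`-palindrome and `a s b` is
the longest `ϑ`-palindromic suffix of `w b`, so the `ϑ`-closure of `w b` is `p s ϑ(p)`. After this step the situation repeats with `ϑ` and `R` exchanged: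
`s ϑ(p)` is an `R`-palindrome, and an `R`-palindromic suffix of `p s ϑ(p) a` longer than
`a s ϑ(p) a` would have a period that produces a `ϑ`-palindromic suffix of `w b` longer than
`a s b`. Hence every two steps append `ϑ(p) R(p)`; as the odd prefixes are `R`-palindromes, this
is the same as prepending `p (Rϑ)(p)`, which gives the period. -/

namespace GPS

open Function

section Antimorphism

variable {A : Type*} {f g : A → A}

@[simp]
lemma anti_nil : anti f [] = [] := rfl

@[simp]
lemma anti_append (u v : List A) : anti f (u ++ v) = anti f v ++ anti f u := by
  simp [anti]

@[simp]
lemma anti_cons (a : A) (u : List A) : anti f (a :: u) = anti f u ++ [f a] := by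
  simp [anti]

@[simp]
lemma length_anti (u : List A) : (anti f u).length = u.length := by
  simp [anti]

lemma anti_anti_eq_map (u : List A) : anti f (anti g u) = u.map (f ∘ g) := by
  simp [anti]

lemma anti_anti (hf : Involutive f) (u : List A) : anti f (anti f u) = u := by
  rw [anti_anti_eq_map, hf.comp_self, List.map_id]

lemma anti_anti_comm (hfg : Function.Commute f g) (u : List A) :
    anti f (anti g u) = anti g (anti f u) := by
  rw [anti_anti_eq_map, anti_anti_eq_map, hfg.semiconj.comp_eq]

lemma IsPal.eq {w : List A} (h : IsPal f w) : anti f w = w := h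

lemma IsPal.middle {u v z : List A} (h : IsPal f (u ++ v ++ z)) (hz : z.length = u.length) :
    IsPal f v ∧ z = anti f u := by
  have h' : anti f z ++ (anti f v ++ anti f u) = u ++ (v ++ z) := by
    simpa [IsPal] using h
  obtain ⟨-, h₁⟩ := List.append_inj h' (by simp [hz])
  obtain ⟨hv, hu⟩ := List.append_inj h₁ (by simp)
  exact ⟨hv, hu.symm⟩

lemma IsPal.append_anti (hf : Involutive f) {v : List A} (hv : IsPal f v) (u : List A) :
    IsPal f (u ++ v ++ anti f u) := by
  simp only [IsPal, anti_append, anti_anti hf, hv.eq, List.append_assoc]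

lemma IsPal.append_eq_append_anti {x v : List A} (h : IsPal f (x ++ v)) (hv : IsPal f v) :
    x ++ v = v ++ anti f x := by
  rw [← h.eq, anti_append, hv.eq]

lemma IsPal.append_anti_of_commute (hfg : Function.Commute f g) {p S : List A}
    (hS : IsPal f S) (hpS : IsPal g (p ++ S)) : IsPal g (S ++ anti f p) :=
  calc anti g (S ++ anti f p) = anti g (anti f (p ++ S)) := by simp only [anti_append, hS.eq]
    _ = anti f (anti g (p ++ S)) := (anti_anti_comm hfg _).symm
    _ = S ++ anti f p := by rw [hpS.eq, anti_append, hS.eq]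

lemma append_append_anti_eq {p S : List A} (hpS : IsPal g (p ++ S))
    (hS : IsPal g (S ++ anti f p)) :
    p ++ (S ++ anti f p ++ anti g p) = p ++ anti g (anti f p) ++ (p ++ S) :=
  calc p ++ (S ++ anti f p ++ anti g p) = p ++ (anti g (S ++ anti f p) ++ anti g p) := by
        rw [hS.eq]
    _ = p ++ anti g (anti f p) ++ anti g (p ++ S) := by simp
    _ = p ++ anti g (anti f p) ++ (p ++ S) := by rw [hpS.eq]

end Antimorphism

section Power

variable {A : Type*}

lemma wpow_zero (l : List A) : wpow l 0 = [] := rfl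

lemma wpow_succ (l : List A) (k : ℕ) : wpow l (k + 1) = l ++ wpow l k := by
  simp [wpow, List.replicate_succ]

lemma wpow_succ' (l : List A) (k : ℕ) : wpow l (k + 1) = wpow l k ++ l := by
  simp [wpow, List.replicate_succ']

lemma length_wpow (l : List A) (k : ℕ) : (wpow l k).length = k * l.length := by
  simp [wpow, List.length_flatten]

lemma getD_wpow (l : List A) (d : A) {k n : ℕ} (h : n < k * l.length) :
    (wpow l k).getD n d = l.getD (n % l.length) d := by
  induction k generalizing n with
  | zero => simp at h
  | succ k ih =>
    rw [wpow_succ]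
    rcases Nat.lt_or_ge n l.length with hn | hn
    · rw [List.getD_append _ _ _ _ hn, Nat.mod_eq_of_lt hn]
    · rw [List.getD_append_right _ _ _ _ hn, ih (by rw [Nat.succ_mul] at h; omega),
        Nat.mod_eq_sub_mod hn]

end Power

section Closure

variable {A : Type*} {f : A → A}

def IsLongestPalSuffix (f : A → A) (v w : List A) : Prop :=
  v <:+ w ∧ IsPal f v ∧ ∀ t, t <:+ w → IsPal f t → t.length ≤ v.length

lemma exists_isPal_prefix (hf : Involutive f) (w : List A) :
    ∃ n : ℕ, ∃ p : List A, p.length = n ∧ w <+: p ∧ IsPal f p :=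
  ⟨_, w ++ anti f w, rfl, List.prefix_append _ _, by simp [IsPal, anti_anti hf]⟩

lemma prefix_closure (w : List A) : w <+: closure f w := by
  classical
  unfold closure
  split
  · next h => exact (Classical.choose_spec (Nat.find_spec h)).2.1
  · exact List.prefix_rfl

lemma isPal_closure (hf : Involutive f) (w : List A) : IsPal f (closure f w) := by
  classical
  unfold closure
  rw [dif_pos (exists_isPal_prefix hf w)]
  exact (Classical.choose_spec (Nat.find_spec (exists_isPal_prefix hf w))).2.2

lemma length_closure_le (hf : Involutive f) {w p : List A} (hw : w <+: p) (hp : IsPal f p) :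
    (closure f w).length ≤ p.length := by
  classical
  unfold closure
  rw [dif_pos (exists_isPal_prefix hf w)]
  rw [(Classical.choose_spec (Nat.find_spec (exists_isPal_prefix hf w))).1]
  exact Nat.find_min' _ ⟨p, rfl, hw, hp⟩

lemma closure_eq_of_isLongestPalSuffix (hf : Involutive f) {u v : List A}
    (h : IsLongestPalSuffix f v (u ++ v)) : closure f (u ++ v) = u ++ v ++ anti f u := by
  obtain ⟨z, hz⟩ := prefix_closure (f := f) (u ++ v)
  have hpal : IsPal f (u ++ v ++ z) := hz ▸ isPal_closure hf _
  have hzu : z.length ≤ u.length := by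
    have := length_closure_le hf (List.prefix_append (u ++ v) (anti f u)) (h.2.1.append_anti hf u)
    rw [← hz] at this
    simp only [List.length_append, length_anti] at this
    omega
  rw [← List.take_append_drop z.length (u ++ v)] at hpal
  obtain ⟨hmid, hzeq⟩ := hpal.middle (by simp; omega)
  have hk : z.length = u.length := by
    have := h.2.2 _ (List.drop_suffix _ _) hmid
    simp only [List.length_drop, List.length_append] at this
    omega
  rw [← hz, hzeq, hk, List.take_left]

end Closure

section Shape

variable {A : Type*} {f g : A → A} {q S : List A} {a : A}

lemma IsLongestPalSuffix.append_anti {v : List A} {c : A}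
    (hv : IsLongestPalSuffix f v (q ++ v)) (hv' : IsPal g (v ++ anti f q ++ [c])) :
    IsLongestPalSuffix g (v ++ anti f q ++ [c]) (q ++ v ++ anti f q ++ [c]) := by
  have hsuffix : v ++ anti f q ++ [c] <:+ q ++ v ++ anti f q ++ [c] := ⟨q, by simp⟩
  refine ⟨hsuffix, hv', fun t ht htpal => ?_⟩
  by_contra! hlt
  obtain ⟨x, rfl⟩ := List.suffix_of_suffix_length_le hsuffix ht hlt.le
  obtain ⟨r, rfl⟩ : x <:+ q := List.suffix_append_self_iff.1 (by simpa using ht)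
  -- The longer `g`-palindrome `x ++ v ++ anti f q ++ [c]` has period `|x|`; comparing its
  -- first `|x| + |v|` letters makes `x ++ v` an `f`-palindromic suffix of `q ++ v`.
  have hperiod : x ++ v ++ (anti f x ++ anti f r ++ [c]) =
      v ++ anti f x ++ (anti f r ++ [c] ++ anti g x) := by
    simpa using htpal.append_eq_append_anti hv'
  have hxv : x ++ v = v ++ anti f x := (List.append_inj hperiod (by simp [Nat.add_comm])).1
  have hlen := hv.2.2 (x ++ v) ⟨r, by simp⟩ (by rw [IsPal, anti_append, hv.2.1.eq, hxv])
  simp only [List.length_append, length_anti, List.length_singleton] at hlen hlt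
  omega

/-- Closing `q ++ a :: S ++ [f a]` under `f` preserves this shape with `f` and `g` exchanged
(`ClosureShape.next`); `q ++ [a]` is the paper's `p`. -/
structure ClosureShape (f g : A → A) (q : List A) (a : A) (S : List A) : Prop where
  isPal_left : IsPal g (q ++ a :: S)
  longest : IsLongestPalSuffix f (a :: S ++ [f a]) (q ++ a :: S ++ [f a])

namespace ClosureShape

lemma isPal_right (h : ClosureShape f g q a S) : IsPal f S :=
  (IsPal.middle (u := [a]) (z := [f a]) h.longest.2.1 rfl).1

lemma longest_append (h : ClosureShape f g q a S) :
    IsLongestPalSuffix f (a :: S ++ [f a]) (q ++ (a :: S ++ [f a])) := by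
  simpa only [List.append_assoc] using h.longest

lemma closure_eq (hf : Involutive f) (h : ClosureShape f g q a S) :
    closure f (q ++ a :: S ++ [f a]) = q ++ a :: (S ++ anti f (q ++ [a])) := by
  rw [List.append_assoc, closure_eq_of_isLongestPalSuffix hf h.longest_append]
  simp

lemma next (hf : Involutive f) (hg : Involutive g) (hfg : Function.Commute f g)
    (h : ClosureShape f g q a S) : ClosureShape g f q a (S ++ anti f (q ++ [a])) where
  isPal_left := h.closure_eq hf ▸ isPal_closure hf _
  longest := by
    have hS : IsPal g (S ++ anti f (q ++ [a])) :=
      h.isPal_right.append_anti_of_commute hfg (by simpa using h.isPal_left)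
    have hv : IsPal g (a :: S ++ [f a] ++ anti f q ++ [g a]) := by
      simpa using hS.append_anti hg [a]
    convert h.longest_append.append_anti hv using 1 <;> simp

variable (hf : Involutive f) (hg : Involutive g) (hfg : Function.Commute f g)
include hf hg hfg

lemma iterate (h : ClosureShape f g q a S) (k : ℕ) :
    ClosureShape f g q a (S ++ wpow (anti f (q ++ [a]) ++ anti g (q ++ [a])) k) := by
  induction k with
  | zero => simpa [wpow_zero] using h
  | succ k ih => simpa [wpow_succ'] using (ih.next hf hg hfg).next hg hf hfg.symm

lemma append_wpow_eq (h : ClosureShape f g q a S) (k : ℕ) :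
    q ++ a :: (S ++ wpow (anti f (q ++ [a]) ++ anti g (q ++ [a])) k) =
      wpow (q ++ [a] ++ anti g (anti f (q ++ [a]))) k ++ (q ++ a :: S) := by
  induction k with
  | zero => simp [wpow_zero]
  | succ k ih =>
    have hk := h.iterate hf hg hfg k
    have hpal := (hk.next hf hg hfg).isPal_right
    have key := append_append_anti_eq (by simpa using hk.isPal_left) hpal
    rw [wpow_succ (q ++ [a] ++ _), List.append_assoc, ← ih, wpow_succ']
    simpa using key

end ClosureShape

end Shape

section Prefixes

variable {A : Type*} {Δ : ℕ → A} {Θ : ℕ → A → A}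

lemma prefixes_succ (n : ℕ) :
    prefixes Δ Θ (n + 1) = closure (Θ n) (prefixes Δ Θ n ++ [Δ n]) := rfl

lemma prefixes_succ_of_closureShape {f g : A → A} {q S : List A} {a : A} {n : ℕ}
    (hf : Involutive f) (h : ClosureShape f g q a S) (hn : prefixes Δ Θ n = q ++ a :: S)
    (hΔ : Δ n = f a) (hΘ : Θ n = f) :
    prefixes Δ Θ (n + 1) = q ++ a :: (S ++ anti f (q ++ [a])) := by
  rw [prefixes_succ, hn, hΔ, hΘ, h.closure_eq hf]

lemma prefixes_add_two_mul {f g : A → A} {q S : List A} {a : A} {n : ℕ}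
    (hf : Involutive f) (hg : Involutive g) (hfg : Function.Commute f g)
    (h : ClosureShape f g q a S) (hn : prefixes Δ Θ n = q ++ a :: S)
    (hpat : ∀ l, Δ (n + 2 * l) = f a ∧ Θ (n + 2 * l) = f ∧
      Δ (n + 2 * l + 1) = g a ∧ Θ (n + 2 * l + 1) = g) (k : ℕ) :
    prefixes Δ Θ (n + 2 * k) =
      q ++ a :: (S ++ wpow (anti f (q ++ [a]) ++ anti g (q ++ [a])) k) := by
  induction k with
  | zero => simpa [wpow_zero] using hn
  | succ k ih =>
    have hk := h.iterate hf hg hfg k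
    obtain ⟨hΔ₁, hΘ₁, hΔ₂, hΘ₂⟩ := hpat k
    have h₁ := prefixes_succ_of_closureShape hf hk ih hΔ₁ hΘ₁
    have h₂ := prefixes_succ_of_closureShape hg (hk.next hf hg hfg) h₁ hΔ₂ hΘ₂
    rw [show n + 2 * (k + 1) = n + 2 * k + 1 + 1 by ring, h₂, wpow_succ']
    simp

lemma closureShape_of_prefixes_succ {f g : A → A} {q S : List A} {a : A} {n : ℕ}
    (hg : Involutive g) (hΘ : Θ n = g) (hn : prefixes Δ Θ (n + 1) = q ++ a :: S)
    (hlong : IsLongestPalSuffix f (a :: S ++ [f a]) (prefixes Δ Θ (n + 1) ++ [f a])) :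
    ClosureShape f g q a S := by
  refine ⟨?_, hn ▸ hlong⟩
  rw [← hn, prefixes_succ, hΘ]
  exact isPal_closure hg _

lemma prefix_prefixes_of_le (Δ : ℕ → A) (Θ : ℕ → A → A) {m n : ℕ} (h : m ≤ n) :
    prefixes Δ Θ m <+: prefixes Δ Θ n := by
  induction n, h using Nat.le_induction with
  | base => exact List.prefix_rfl
  | succ n _ ih => exact ih.trans ((List.prefix_append _ _).trans (prefix_closure _))

lemma le_length_prefixes (Δ : ℕ → A) (Θ : ℕ → A → A) (n : ℕ) :
    n ≤ (prefixes Δ Θ n).length := by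
  induction n with
  | zero => simp
  | succ n ih =>
    have := (prefix_closure (f := Θ n) (prefixes Δ Θ n ++ [Δ n])).length_le
    simp only [List.length_append, List.length_singleton] at this
    rw [prefixes_succ]
    omega

end Prefixes

section Word

variable {A : Type*} [Inhabited A]

lemma IsPref.of_prefix {w w' : List A} {x : ℕ → A} (hw' : IsPref w' x) (h : w <+: w') :
    IsPref w x := by
  obtain ⟨t, rfl⟩ := h
  intro i hi
  rw [← hw' i (by simp; omega), List.getD_append _ _ _ _ hi]

lemma isPref_prefixes (Δ : ℕ → A) (Θ : ℕ → A → A) (n : ℕ) :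
    IsPref (prefixes Δ Θ n) (word Δ Θ) := by
  intro i hi
  rcases le_total n (i + 1) with hn | hn
  · obtain ⟨t, ht⟩ := prefix_prefixes_of_le Δ Θ hn
    rw [word, ← ht, List.getD_append _ _ _ _ hi]
  · obtain ⟨t, ht⟩ := prefix_prefixes_of_le Δ Θ hn
    have := le_length_prefixes Δ Θ (i + 1)
    rw [word, ← ht, List.getD_append _ _ _ _ (by omega)]

lemma purePeriod_of_isPref_wpow {Q : List A} {x : ℕ → A} (hQ : Q ≠ [])
    (h : ∀ k, IsPref (wpow Q k) x) : PurePeriod Q x := by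
  refine ⟨hQ, fun i => ?_⟩
  have hi : i < (i + 1) * Q.length :=
    lt_of_lt_of_le i.lt_succ_self (Nat.le_mul_of_pos_right _ (List.length_pos_iff.2 hQ))
  rw [← h (i + 1) i (by rw [length_wpow]; exact hi), getD_wpow _ _ hi]

end Word

lemma Et_involutive (i : Fin 3) : Involutive (Et i) := fun x => by
  simp only [Et, neg_add, neg_neg, neg_add_cancel_left]

lemma commute_Et_Rt (i : Fin 3) : Function.Commute (Et i) Rt := fun _ => rfl

theorem periodic_shape_ternary_two_antimorphisms_general (Δ : ℕ → Fin 3) (Θ : ℕ → Fin 3 → Fin 3)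
    (i : Fin 3) (a b : Fin 3) (hab : Et i a = b) (m : ℕ)
    (hpat : ∀ l : ℕ, Δ (m + 2*l) = a ∧ Δ (m + 2*l + 1) = b ∧
      Θ (m + 2*l) = Rt ∧ Θ (m + 2*l + 1) = Et i)
    (p s : List (Fin 3))
    (hps : prefixes Δ Θ (m + 1) = p ++ s)
    (hsuf : (a :: (s ++ [b])) <:+ (prefixes Δ Θ (m + 1) ++ [b]))
    (hpal : IsPal (Et i) (a :: (s ++ [b])))
    (hlongest : ∀ t : List (Fin 3), t <:+ (prefixes Δ Θ (m + 1) ++ [b]) →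
      IsPal (Et i) t → t.length ≤ (a :: (s ++ [b])).length) :
    (∀ k : ℕ,
      prefixes Δ Θ (m + 2*k + 1) = p ++ s ++ wpow (anti (Et i) p ++ anti Rt p) k ∧
      prefixes Δ Θ (m + 2*k + 2) =
        p ++ s ++ wpow (anti (Et i) p ++ anti Rt p) k ++ anti (Et i) p) ∧
    PurePeriod (p ++ anti Rt (anti (Et i) p)) (word Δ Θ) := by
  have hf := Et_involutive i
  have hg : Involutive Rt := fun _ => rfl
  have hfg := commute_Et_Rt i
  subst hab
  obtain ⟨z, hz⟩ := hsuf
  obtain rfl : p = z ++ [a] := by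
    rw [hps] at hz
    exact (List.append_cancel_right (by simpa using hz)).symm
  have hshape : ClosureShape (Et i) Rt z a s :=
    closureShape_of_prefixes_succ hg (by simpa using (hpat 0).2.2.1) (by simpa using hps)
      ⟨⟨z, by simpa using hz⟩, by simpa using hpal, fun t ht htpal => by
        simpa using hlongest t ht htpal⟩
  have hpat' : ∀ l, Δ (m + 1 + 2 * l) = Et i a ∧ Θ (m + 1 + 2 * l) = Et i ∧
      Δ (m + 1 + 2 * l + 1) = Rt a ∧ Θ (m + 1 + 2 * l + 1) = Rt := fun l => by
    obtain ⟨-, hΔ₁, -, hΘ₁⟩ := hpat l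
    obtain ⟨hΔ₂, -, hΘ₂, -⟩ := hpat (l + 1)
    rw [show m + 2 * (l + 1) = m + 2 * l + 1 + 1 by ring] at hΔ₂ hΘ₂
    rw [show m + 1 + 2 * l = m + 2 * l + 1 by ring]
    exact ⟨hΔ₁, hΘ₁, hΔ₂, hΘ₂⟩
  have hodd k := prefixes_add_two_mul hf hg hfg hshape (by simpa using hps) hpat' k
  refine ⟨fun k => ⟨?_, ?_⟩, ?_⟩
  · rw [show m + 2 * k + 1 = m + 1 + 2 * k by ring, hodd]
    simp
  · rw [show m + 2 * k + 2 = m + 1 + 2 * k + 1 by ring,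
      prefixes_succ_of_closureShape hf (hshape.iterate hf hg hfg k) (hodd k) (hpat' k).1
        (hpat' k).2.1]
    simp
  · refine purePeriod_of_isPref_wpow (by simp) fun k =>
      (isPref_prefixes Δ Θ (m + 1 + 2 * k)).of_prefix ?_
    rw [hodd k, hshape.append_wpow_eq hf hg hfg]
    exact List.prefix_append _ _

/-- for a ternary bi-sequence of the form `(v(ab)^ω, σ(Rϑ)^ω)` with
`|v| = |σ| = m`, `ϑ = E_i`, `ϑ(a) = b`, writing `w_{m+1} = ps` where `asb` is the
longest `ϑ`-palindromic suffix of `w_{m+1}b`, one has for every `k ≥ 1` (here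
shifted, `k ↦ k+1`): `w_{m+2k-1} = ps(ϑ(p)R(p))^{k-1}` and
`w_{m+2k} = ps(ϑ(p)R(p))^{k-1}ϑ(p)`; consequently `u` is periodic with period
`p·(Rϑ)(p)`. -/
theorem periodic_shape_ternary_two_antimorphisms (Δ : ℕ → Fin 3) (Θ : ℕ → Fin 3 → Fin 3)
    (hΘ : ∀ n, Θ n = Rt ∨ ∃ i' : Fin 3, Θ n = Et i')
    (i : Fin 3) (a b : Fin 3) (hab : Et i a = b) (m : ℕ)
    (hpat : ∀ l : ℕ, Δ (m + 2*l) = a ∧ Δ (m + 2*l + 1) = b ∧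
      Θ (m + 2*l) = Rt ∧ Θ (m + 2*l + 1) = Et i)
    (p s : List (Fin 3))
    (hps : prefixes Δ Θ (m + 1) = p ++ s)
    (hsuf : (a :: (s ++ [b])) <:+ (prefixes Δ Θ (m + 1) ++ [b]))
    (hpal : IsPal (Et i) (a :: (s ++ [b])))
    (hlongest : ∀ t : List (Fin 3), t <:+ (prefixes Δ Θ (m + 1) ++ [b]) →
      IsPal (Et i) t → t.length ≤ (a :: (s ++ [b])).length) :
    (∀ k : ℕ,
      prefixes Δ Θ (m + 2*k + 1) = p ++ s ++ wpow (anti (Et i) p ++ anti Rt p) k ∧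
      prefixes Δ Θ (m + 2*k + 2) =
        p ++ s ++ wpow (anti (Et i) p ++ anti Rt p) k ++ anti (Et i) p) ∧
    PurePeriod (p ++ anti Rt (anti (Et i) p)) (word Δ Θ) :=
  periodic_shape_ternary_two_antimorphisms_general Δ Θ i a b hab m hpat p s hps hsuf hpal hlongest

end GPS
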